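/- arXiv:2110.06244 — 3 statements merged into one kernel-verified Lean document; each statement's English description precedes it below -/
import Mathlib

section
/- The sequence (T_n mod 5)_{n≥0} is uniformly recurrent: for every n ≥ 1 and every i ≥ 0, there exists j with i < j ≤ i + 200n − 192 such that T_{i+t} ≡ T_{j+t} (mod 5) for all 0 ≤ t < n. -/
/-!
Since `T_n` is the coefficient of `X^n` in `(1 + X + X²)^n`, and `(1 + X + X²)^5 = 1 + X^5 + X^10`
over `ZMod 5`, the Lucas-type congruence `T_{a·5^M + b} ≡ T_a T_b` holds for `b < 5^M`; so `T_n`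
mod 5 is the product of the `T` of the base-5 digits of `n`, and these are all nonzero.
Given a window `[i, i + n)`, take `K = 5^M` with `n ≤ K ≤ 5(n - 1)`: the window meets at most two
consecutive blocks `Q = i / K` and `Q + 1` of length `K`, so shifting it by `D·K` preserves it
as soon as `T_{Q+D} ≡ T_Q` and `T_{Q+1+D} ≡ T_{Q+1}`. Because the `T_b` with `b < 5` take every
nonzero residue, and so do the ratios `T_{b+1}/T_b` with `b < 4`, such a `D ≤ 40` always exists.
-/

def trinomial (n : ℕ) : ℕ :=
  ∑ k ∈ Finset.range (n + 1), n.choose (2 * k) * (2 * k).choose k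

open Finset
open Polynomial hiding trinomial

theorem coeff_one_add_X_add_X_sq_pow (R : Type*) [CommSemiring R] (n : ℕ) :
    ((1 + X + X ^ 2 : R[X]) ^ n).coeff n = trinomial n := by
  rw [show (1 + X + X ^ 2 : R[X]) = X ^ 2 + (1 + X) by ring, add_pow, finsetSum_coeff,
    trinomial, Nat.cast_sum]
  refine sum_congr rfl fun k _ => ?_
  rw [← pow_mul, mul_assoc, coeff_X_pow_mul', mul_comm, ← Nat.cast_comm, coeff_natCast_mul,
    coeff_one_add_X_pow]
  split_ifs with h
  · rw [Nat.choose_mul (by omega), show k * 2 - k = k by omega,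
      Nat.choose_symm_of_eq_add (show n - k = (n - k * 2) + k by omega), Nat.cast_mul]
  · simp [Nat.choose_eq_zero_of_lt (not_le.mp h)]

theorem natDegree_one_add_X_add_X_sq_pow_le (R : Type*) [CommSemiring R] (n : ℕ) :
    ((1 + X + X ^ 2 : R[X]) ^ n).natDegree ≤ 2 * n := by
  rw [mul_comm]
  exact natDegree_pow_le_of_le n (by compute_degree)

-- `(1 + X + X²)^(p a) = expand p ((1 + X + X²)^a)` over `ZMod p`, and `(1 + X + X²)^b` has
-- degree `2b < p + b`, so only one pair of coefficients contributes.
theorem trinomial_mul_add (p : ℕ) [Fact p.Prime] (a b : ℕ) (hb : b < p) :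
    (trinomial (p * a + b) : ZMod p) = trinomial a * trinomial b := by
  have hp : 0 < p := Fact.out (p := p.Prime) |>.pos
  simp only [← coeff_one_add_X_add_X_sq_pow]
  rw [pow_add, pow_mul', ← ZMod.expand_card, coeff_mul, sum_eq_single (p * a, b)]
  · exact congrArg (· * _) (coeff_expand_mul' hp _ a)
  · rintro ⟨u, v⟩ huv hne
    rw [HasAntidiagonal.mem_antidiagonal] at huv
    by_cases hdvd : p ∣ u
    · obtain ⟨m, rfl⟩ := hdvd
      have hma : m < a := by
        rcases lt_trichotomy m a with h | rfl | h
        · exact h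
        · exact absurd (by simp only [Prod.mk.injEq, true_and]; omega) hne
        · nlinarith
      have hv : 2 * b < v := by nlinarith
      rw [coeff_eq_zero_of_natDegree_lt
        ((natDegree_one_add_X_add_X_sq_pow_le _ b).trans_lt hv), mul_zero]
    · rw [coeff_expand hp, if_neg hdvd, zero_mul]
  · simp

theorem trinomial_mul_pow_add (p : ℕ) [Fact p.Prime] (M a b : ℕ) (hb : b < p ^ M) :
    (trinomial (a * p ^ M + b) : ZMod p) = trinomial a * trinomial b := by
  induction M generalizing b with
  | zero => simp [Nat.lt_one_iff.mp hb, trinomial]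
  | succ M ih =>
    have hp : 0 < p := Fact.out (p := p.Prime) |>.pos
    have hb₁ : b / p < p ^ M := Nat.div_lt_of_lt_mul (by rwa [← pow_succ'])
    have hb₀ : b % p < p := Nat.mod_lt b hp
    have hsplit : a * p ^ (M + 1) + b = p * (a * p ^ M + b / p) + b % p := by
      conv_lhs => rw [← Nat.div_add_mod b p]
      ring
    have hTb : (trinomial b : ZMod p) = trinomial (b / p) * trinomial (b % p) := by
      conv_lhs => rw [← Nat.div_add_mod b p]
      exact trinomial_mul_add p _ _ hb₀
    rw [hsplit, trinomial_mul_add p _ _ hb₀, ih _ hb₁, hTb, mul_assoc]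

theorem trinomial_add_mul_pow_of_eq (p : ℕ) [Fact p.Prime] (M m D : ℕ)
    (hD : (trinomial (m / p ^ M + D) : ZMod p) = trinomial (m / p ^ M)) :
    (trinomial (m + D * p ^ M) : ZMod p) = trinomial m := by
  have hK : m % p ^ M < p ^ M := Nat.mod_lt _ (pow_pos (Fact.out (p := p.Prime)).pos M)
  have hm : m = m / p ^ M * p ^ M + m % p ^ M := (Nat.div_add_mod' m _).symm
  rw [hm, show m / p ^ M * p ^ M + m % p ^ M + D * p ^ M = (m / p ^ M + D) * p ^ M + m % p ^ M
    by ring, trinomial_mul_pow_add p M _ _ hK, trinomial_mul_pow_add p M _ _ hK, hD]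

instance : Fact (Nat.Prime 5) := ⟨Nat.prime_five⟩

theorem trinomial_cast_five_ne_zero (n : ℕ) : (trinomial n : ZMod 5) ≠ 0 := by
  induction n using Nat.strong_induction_on with
  | _ n ih =>
    have hsmall : ∀ b < 5, (trinomial b : ZMod 5) ≠ 0 := by decide
    rcases Nat.lt_or_ge n 5 with h | h
    · exact hsmall n h
    · rw [← Nat.div_add_mod n 5, trinomial_mul_add 5 _ _ (Nat.mod_lt _ (by norm_num))]
      exact mul_ne_zero (ih _ (by omega)) (hsmall _ (Nat.mod_lt _ (by norm_num)))

theorem exists_trinomial_cast_five_eq (m : ℕ) (τ : ZMod 5) (hτ : τ ≠ 0) :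
    ∃ m', m < m' ∧ m' ≤ m + 8 ∧ (trinomial m' : ZMod 5) = τ := by
  have hvalues : ∀ u : ZMod 5, u ≠ 0 → ∃ r ∈ Icc 1 4, (trinomial r : ZMod 5) = u := by decide
  set s := (m + 4) / 5
  obtain ⟨r, hr, hTr⟩ := hvalues (τ * (trinomial s : ZMod 5)⁻¹)
    (mul_ne_zero hτ (inv_ne_zero (trinomial_cast_five_ne_zero s)))
  rw [mem_Icc] at hr
  refine ⟨5 * s + r, by omega, by omega, ?_⟩
  rw [trinomial_mul_add 5 _ _ (by omega), hTr, mul_comm,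
    inv_mul_cancel_right₀ (trinomial_cast_five_ne_zero s)]

theorem exists_shift_trinomial_cast_five_pair (q : ℕ) :
    ∃ D, 1 ≤ D ∧ D ≤ 40 ∧ (trinomial (q + D) : ZMod 5) = trinomial q ∧
      (trinomial (q + 1 + D) : ZMod 5) = trinomial (q + 1) := by
  have hq := Nat.div_add_mod q 5
  have hr : q % 5 < 5 := Nat.mod_lt _ (by norm_num)
  set s := q / 5
  set r := q % 5
  by_cases hr4 : r < 4
  · -- `q` and `q + 1` share the block `s`: move that block to one with the same value.
    obtain ⟨s', hss', hs', hT⟩ :=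
      exists_trinomial_cast_five_eq s (trinomial s) (trinomial_cast_five_ne_zero s)
    refine ⟨5 * (s' - s), by omega, by omega, ?_, ?_⟩
    · rw [show q + 5 * (s' - s) = 5 * s' + r by omega, ← hq,
        trinomial_mul_add 5 _ _ hr, trinomial_mul_add 5 _ _ hr, hT]
    · rw [show q + 1 + 5 * (s' - s) = 5 * s' + (r + 1) by omega,
        show q + 1 = 5 * s + (r + 1) by omega,
        trinomial_mul_add 5 _ _ (by omega), trinomial_mul_add 5 _ _ (by omega), hT]
  · -- `q` ends a block: realise the ratio `T(q+1)/T(q)` inside a single block instead.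
    have hratios : ∀ ρ : ZMod 5, ρ ≠ 0 →
        ∃ r' ∈ range 4, (trinomial (r' + 1) : ZMod 5) = ρ * trinomial r' := by decide
    have hTq := trinomial_cast_five_ne_zero q
    obtain ⟨r', hr', hρ⟩ := hratios (trinomial (q + 1) * (trinomial q : ZMod 5)⁻¹)
      (mul_ne_zero (trinomial_cast_five_ne_zero _) (inv_ne_zero hTq))
    have hTr' := trinomial_cast_five_ne_zero r'
    obtain ⟨s', hss', hs', hT⟩ := exists_trinomial_cast_five_eq s
      (trinomial q * (trinomial r' : ZMod 5)⁻¹) (mul_ne_zero hTq (inv_ne_zero hTr'))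
    rw [mem_range] at hr'
    refine ⟨5 * s' + r' - q, by omega, by omega, ?_, ?_⟩
    · rw [show q + (5 * s' + r' - q) = 5 * s' + r' by omega, trinomial_mul_add 5 _ _ (by omega),
        hT, inv_mul_cancel_right₀ hTr']
    · rw [show q + 1 + (5 * s' + r' - q) = 5 * s' + (r' + 1) by omega,
        trinomial_mul_add 5 _ _ (by omega), hT, hρ]
      field_simp

theorem pow_clog_le_mul_pred (b n : ℕ) (hb : 1 < b) (hn : 2 ≤ n) :
    b ^ Nat.clog b n ≤ b * (n - 1) := by
  have hpos : 0 < Nat.clog b n := Nat.clog_pos hb hn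
  have hlt : b ^ (Nat.clog b n - 1) < n := Nat.pow_pred_clog_lt_self hb (by omega)
  calc b ^ Nat.clog b n = b * b ^ (Nat.clog b n - 1) := by
        rw [← pow_succ', Nat.sub_add_cancel hpos]
    _ ≤ b * (n - 1) := Nat.mul_le_mul_left b (by omega)

theorem trinomial_mod_five_uniformly_recurrent :
    ∀ n : ℕ, 1 ≤ n → ∀ i : ℕ, ∃ j : ℕ, i < j ∧ j ≤ i + 200 * n - 192 ∧
      ∀ t < n, trinomial (i + t) % 5 = trinomial (j + t) % 5 := by
  intro n hn i
  simp only [← ZMod.natCast_eq_natCast_iff']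
  rcases Nat.lt_or_ge n 2 with hn1 | hn2
  · obtain ⟨j, hij, hj, hT⟩ :=
      exists_trinomial_cast_five_eq i (trinomial i) (trinomial_cast_five_ne_zero i)
    refine ⟨j, hij, by omega, fun t ht => ?_⟩
    obtain rfl : t = 0 := by omega
    exact hT.symm
  · set K := 5 ^ Nat.clog 5 n
    have hnK : n ≤ K := Nat.le_pow_clog (by norm_num) n
    have hK : K ≤ 5 * (n - 1) := pow_clog_le_mul_pred 5 n (by norm_num) hn2
    have hK0 : 0 < K := by positivity
    obtain ⟨D, hD1, hD40, hT₀, hT₁⟩ := exists_shift_trinomial_cast_five_pair (i / K)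
    have hDK : D * K ≤ 40 * (5 * (n - 1)) := Nat.mul_le_mul hD40 hK
    refine ⟨i + D * K, by nlinarith, by omega, fun t ht => ?_⟩
    have hblock : (i + t) / K = i / K ∨ (i + t) / K = i / K + 1 := by
      rw [Nat.add_div hK0, Nat.div_eq_of_lt (ht.trans_le hnK)]
      split_ifs <;> simp
    rw [add_right_comm, eq_comm]
    apply trinomial_add_mul_pow_of_eq
    rcases hblock with h | h <;> rw [h] <;> assumption
end

section
/- Let p be a prime and let n have base-p digits n_0, n_1, …, n_r (in any order). Then T_n ≡ ∏_{i=0}^{r} T_{n_i} (mod p), where T_k denotes the k-th central trinomial coefficient. -/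
open Polynomial hiding trinomial

theorem Nat.eq_prod_map_digits_of_mod_mul_div {M : Type*} [Monoid M] {b : ℕ} (hb : 1 < b)
    {f : ℕ → M} (h0 : f 0 = 1) (hf : ∀ n, f n = f (n % b) * f (n / b)) (n : ℕ) :
    f n = ((Nat.digits b n).map f).prod := by
  induction n using Nat.strong_induction_on with
  | _ n ih =>
    rcases Nat.eq_zero_or_pos n with rfl | hn
    · simpa using h0
    · rw [Nat.digits_def' hb hn, List.map_cons, List.prod_cons,
        ← ih (n / b) (Nat.div_lt_self hn hb)]
      exact hf n

theorem Polynomial.coeff_expand_mul_of_natDegree_lt {R : Type*} [CommSemiring R] {p : ℕ}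
    (hp : 0 < p) (f g : R[X]) {a b : ℕ} (hb : b < p) (hg : g.natDegree < p + b) :
    (expand R p f * g).coeff (p * a + b) = f.coeff a * g.coeff b := by
  rw [coeff_mul, Finset.sum_eq_single (p * a, b), coeff_expand_mul' hp]
  · rintro ⟨i, j⟩ hij hne
    rw [Finset.HasAntidiagonal.mem_antidiagonal] at hij
    dsimp only at hij
    by_cases hdvd : p ∣ i
    · obtain ⟨m, rfl⟩ := hdvd
      suffices g.natDegree < j by rw [coeff_eq_zero_of_natDegree_lt this, mul_zero]
      rcases lt_trichotomy m a with hma | rfl | ham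
      · have := Nat.mul_le_mul_left p (Nat.succ_le_of_lt hma)
        rw [Nat.mul_succ] at this
        omega
      · obtain rfl : j = b := by omega
        exact absurd rfl hne
      · have := Nat.mul_le_mul_left p (Nat.succ_le_of_lt ham)
        rw [Nat.mul_succ] at this
        omega
    · rw [coeff_expand hp, if_neg hdvd, zero_mul]
  · simp

theorem coeff_one_add_X_add_X_sq_pow_self {R : Type*} [CommSemiring R] (n : ℕ) :
    ((1 + X + X ^ 2 : R[X]) ^ n).coeff n = trinomial n := by
  rw [show (1 + X + X ^ 2 : R[X]) = X ^ 2 + (1 + X) by ring, add_pow, finsetSum_coeff, trinomial,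
    Nat.cast_sum]
  refine Finset.sum_congr rfl fun k _ => ?_
  rw [← pow_mul, ← Nat.cast_comm, ← mul_assoc, ← C_eq_natCast, mul_assoc, coeff_C_mul,
    coeff_X_pow_mul', coeff_one_add_X_pow]
  split_ifs with h
  · rw [Nat.choose_mul (n := n) (by omega : k ≤ 2 * k), show 2 * k - k = k by omega,
      ← Nat.choose_symm (show k ≤ n - k by omega), show n - k - k = n - 2 * k by omega,
      Nat.cast_mul]
  · rw [mul_zero, Nat.choose_eq_zero_of_lt (by omega), zero_mul, Nat.cast_zero]

theorem natCast_trinomial_eq_mod_mul_div (p : ℕ) [hp : Fact p.Prime] (n : ℕ) :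
    (trinomial n : ZMod p) = trinomial (n % p) * trinomial (n / p) := by
  set P : (ZMod p)[X] := 1 + X + X ^ 2
  have hmod : n % p < p := Nat.mod_lt n hp.out.pos
  have hdeg : (P ^ (n % p)).natDegree < p + n % p := by
    have hP : P.natDegree ≤ 2 := by unfold P; compute_degree
    have := natDegree_pow_le_of_le (n % p) hP
    omega
  have hsplit : P ^ n = expand (ZMod p) p (P ^ (n / p)) * P ^ (n % p) := by
    rw [map_pow, ZMod.expand_card, ← pow_mul, ← pow_add, Nat.div_add_mod]
  calc (trinomial n : ZMod p) = (P ^ n).coeff (p * (n / p) + n % p) := by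
        rw [Nat.div_add_mod, coeff_one_add_X_add_X_sq_pow_self]
    _ = trinomial (n % p) * trinomial (n / p) := by
        rw [hsplit, coeff_expand_mul_of_natDegree_lt hp.out.pos _ _ hmod hdeg,
          coeff_one_add_X_add_X_sq_pow_self, coeff_one_add_X_add_X_sq_pow_self, mul_comm]

theorem trinomial_lucas (p n : ℕ) (hp : p.Prime) :
    trinomial n ≡ ((Nat.digits p n).map trinomial).prod [MOD p] := by
  have : Fact p.Prime := ⟨hp⟩
  rw [← ZMod.natCast_eq_natCast_iff, Nat.cast_list_prod, List.map_map]
  exact Nat.eq_prod_map_digits_of_mod_mul_div hp.one_lt (by simp [trinomial])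
    (natCast_trinomial_eq_mod_mul_div p) n
end

section
/- Let p be an odd prime and let τ_i = T_i mod p for 0 ≤ i ≤ p−1, where T_i is the i-th central trinomial coefficient. Suppose no τ_i equals 0 and some τ_i is a primitive root modulo p. Then the sequence (T_n mod p)_{n≥0} is uniformly recurrent. -/
open Polynomial hiding trinomial

def IsSyndetic (S : Set ℕ) : Prop :=
  ∃ C : ℕ, ∀ i : ℕ, ∃ j ∈ S, i ≤ j ∧ j ≤ i + C

def IsUniformlyRecurrent {α : Type*} (x : ℕ → α) : Prop :=
  ∀ i₀ m : ℕ, ∃ C : ℕ, ∀ i : ℕ, ∃ j : ℕ, i ≤ j ∧ j + m ≤ i + C ∧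
    ∀ t < m, x (j + t) = x (i₀ + t)

theorem IsUniformlyRecurrent.comp {α β : Type*} {x : ℕ → α} (hx : IsUniformlyRecurrent x)
    (g : α → β) : IsUniformlyRecurrent (g ∘ x) := by
  intro i₀ m
  obtain ⟨C, hC⟩ := hx i₀ m
  refine ⟨C, fun i => ?_⟩
  obtain ⟨j, hij, hjC, hj⟩ := hC i
  exact ⟨j, hij, hjC, fun t ht => congrArg g (hj t ht)⟩

/-- `f n` is the product of the values of `f` at the base-`p` digits of `n`. -/
structure IsDigitMultiplicative {M : Type*} [Monoid M] (p : ℕ) (f : ℕ → M) : Prop where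
  apply_zero : f 0 = 1
  apply_mul_add : ∀ a, ∀ b < p, f (a * p + b) = f a * f b

namespace IsDigitMultiplicative

section Monoid

variable {M : Type*} [Monoid M] {p : ℕ} {f : ℕ → M}

theorem apply_mul_pow_add (hf : IsDigitMultiplicative p f) (c : ℕ) {k n : ℕ} (hn : n < p ^ k) :
    f (c * p ^ k + n) = f c * f n := by
  induction k generalizing c n with
  | zero =>
    obtain rfl : n = 0 := by simpa using hn
    simp [hf.apply_zero]
  | succ k ih =>
    have hp : 0 < p := Nat.pos_of_ne_zero (by rintro rfl; simp at hn)
    have hdiv : n / p < p ^ k := by rwa [Nat.div_lt_iff_lt_mul hp, ← pow_succ]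
    have hsplit : c * p ^ (k + 1) + n = (c * p ^ k + n / p) * p + n % p := by
      rw [pow_succ]; linarith [Nat.div_add_mod' n p]
    rw [hsplit, hf.apply_mul_add _ _ (Nat.mod_lt _ hp), ih _ hdiv, mul_assoc,
      ← hf.apply_mul_add _ _ (Nat.mod_lt _ hp), Nat.div_add_mod']

theorem exists_lt_pow_apply_eq_pow (hf : IsDigitMultiplicative p f) {i : ℕ} (hi : i < p)
    (e : ℕ) : ∃ r < p ^ e, f r = f i ^ e := by
  induction e with
  | zero => exact ⟨0, by simp, by simp [hf.apply_zero]⟩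
  | succ e ih =>
    obtain ⟨r, hr, hfr⟩ := ih
    refine ⟨r * p + i, ?_, by rw [hf.apply_mul_add _ _ hi, hfr, pow_succ]⟩
    calc r * p + i < (r + 1) * p := by linarith
      _ ≤ p ^ e * p := Nat.mul_le_mul_right _ hr
      _ = p ^ (e + 1) := (pow_succ _ _).symm

theorem isSyndetic_setOf_apply_eq_one (hf : IsDigitMultiplicative p f) (e : ℕ)
    (hinv : ∀ c, ∃ r < p ^ e, f c * f r = 1) : IsSyndetic {b | f b = 1} := by
  refine ⟨2 * p ^ e, fun i => ?_⟩
  obtain ⟨r, hr, hfr⟩ := hinv (i / p ^ e + 1)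
  refine ⟨(i / p ^ e + 1) * p ^ e + r, (hf.apply_mul_pow_add _ hr).trans hfr, ?_⟩
  have hi := Nat.lt_div_mul_add (a := i) (Nat.zero_lt_of_lt hr)
  have hi' := Nat.div_mul_le_self i (p ^ e)
  constructor <;> nlinarith

theorem isUniformlyRecurrent (hf : IsDigitMultiplicative p f) (hp : 1 < p)
    (hS : IsSyndetic {b | f b = 1}) : IsUniformlyRecurrent f := by
  intro i₀ m
  set K := p ^ (i₀ + m)
  have hK : i₀ + m < K := Nat.lt_pow_self hp
  obtain ⟨C, hC⟩ := hS
  refine ⟨(C + 2) * K, fun i => ?_⟩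
  obtain ⟨b, hb : f b = 1, hib, hbi⟩ := hC (i / K + 1)
  have hi := Nat.lt_div_mul_add (a := i) (by omega : 0 < K)
  have hi' := Nat.div_mul_le_self i K
  refine ⟨b * K + i₀, by nlinarith, by nlinarith, fun t ht => ?_⟩
  rw [add_assoc, hf.apply_mul_pow_add _ (by omega), hb, one_mul]

end Monoid

theorem apply_ne_zero {M : Type*} [MonoidWithZero M] [NoZeroDivisors M] {p : ℕ} {f : ℕ → M}
    (hf : IsDigitMultiplicative p f) (hp : 1 < p) (h0 : ∀ i < p, f i ≠ 0) (n : ℕ) :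
    f n ≠ 0 := by
  induction n using Nat.strong_induction_on with
  | _ n ih =>
    rcases lt_or_ge n p with hn | hn
    · exact h0 n hn
    rw [← Nat.div_add_mod' n p, hf.apply_mul_add _ _ (Nat.mod_lt _ (by omega))]
    exact mul_ne_zero (ih _ (Nat.div_lt_self (by omega) hp)) (h0 _ (Nat.mod_lt _ (by omega)))

section FiniteField

variable {K : Type*} [Field K] [Fintype K] {p : ℕ} {f : ℕ → K}

theorem exists_lt_pow_mul_eq_one (hf : IsDigitMultiplicative p f) (hne : ∀ n, f n ≠ 0)
    {i : ℕ} (hi : i < p) (hg : orderOf (f i) = Fintype.card K - 1) (c : ℕ) :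
    ∃ r < p ^ (Fintype.card K - 1), f c * f r = 1 := by
  have : NeZero (Fintype.card K - 1) := ⟨by have := Fintype.one_lt_card (α := K); omega⟩
  obtain ⟨e, he, hge⟩ := (hg ▸ IsPrimitiveRoot.orderOf (f i)).eq_pow_of_pow_eq_one
    (FiniteField.pow_card_sub_one_eq_one _ (inv_ne_zero (hne c)))
  obtain ⟨r, hr, hfr⟩ := hf.exists_lt_pow_apply_eq_pow hi e
  exact ⟨r, hr.trans_le (Nat.pow_le_pow_right (by omega) he.le),
    by rw [hfr, hge, mul_inv_cancel₀ (hne c)]⟩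

theorem isUniformlyRecurrent_of_orderOf (hf : IsDigitMultiplicative p f) (hp : 1 < p)
    (h0 : ∀ i < p, f i ≠ 0) (hg : ∃ i < p, orderOf (f i) = Fintype.card K - 1) :
    IsUniformlyRecurrent f := by
  obtain ⟨i, hi, hgi⟩ := hg
  exact hf.isUniformlyRecurrent hp <| hf.isSyndetic_setOf_apply_eq_one _ <|
    hf.exists_lt_pow_mul_eq_one (hf.apply_ne_zero hp h0) hi hgi

end FiniteField

end IsDigitMultiplicative

theorem coeff_one_add_X_sq_pow {R : Type*} [CommSemiring R] (a b : ℕ) :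
    ((1 + X ^ 2 : R[X]) ^ a).coeff b = if 2 ∣ b then (a.choose (b / 2) : R) else 0 := by
  have h : (1 + X ^ 2 : R[X]) = expand R 2 (1 + X) := by simp
  rw [h, ← map_pow, coeff_expand two_pos, coeff_one_add_X_pow]

theorem trinomial_eq_coeff (n : ℕ) : trinomial n = ((1 + X + X ^ 2 : ℕ[X]) ^ n).coeff n := by
  have hterm : ∀ m ∈ Finset.range (n + 1),
      ((1 + X ^ 2 : ℕ[X]) ^ m * X ^ (n - m) * (n.choose m : ℕ[X])).coeff n
        = n.choose m * if 2 ∣ m then m.choose (m / 2) else 0 := by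
    intro m hm
    have hmn : n - (n - m) = m := by simp at hm; omega
    rw [← C_eq_natCast, coeff_mul_C, coeff_mul_X_pow', if_pos (Nat.sub_le n m), hmn,
      coeff_one_add_X_sq_pow, Nat.cast_id, Nat.cast_id, mul_comm]
  rw [show (1 + X + X ^ 2 : ℕ[X]) = (1 + X ^ 2) + X by ring, add_pow, finsetSum_coeff,
    Finset.sum_congr rfl hterm, trinomial]
  refine Finset.sum_bij_ne_zero (fun k _ _ => 2 * k) ?_ (fun _ _ _ _ _ _ h => by omega) ?_ ?_
  · intro k _ hk
    have : n.choose (2 * k) ≠ 0 := left_ne_zero_of_mul hk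
    rw [Ne, Nat.choose_eq_zero_iff] at this
    simp only [Finset.mem_range]
    omega
  · intro m hm hm0
    obtain ⟨k, rfl⟩ : 2 ∣ m := by by_contra h; simp [h] at hm0
    exact ⟨k, Finset.mem_range.2 (by simp at hm; omega), by simpa using hm0, rfl⟩
  · intro k _ _
    simp

theorem trinomial_cast_eq_coeff (R : Type*) [CommSemiring R] (n : ℕ) :
    (trinomial n : R) = ((1 + X + X ^ 2 : R[X]) ^ n).coeff n := by
  rw [trinomial_eq_coeff, ← eq_natCast (Nat.castRingHom R), ← coeff_map]
  simp

open Finset.HasAntidiagonal in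
theorem coeff_pow_mul_card_add {K : Type*} [Field K] [Fintype K] {F : K[X]}
    (hF : F.natDegree ≤ 2) (a : ℕ) {b : ℕ} (hb : b < Fintype.card K) :
    (F ^ (a * Fintype.card K + b)).coeff (a * Fintype.card K + b)
      = (F ^ a).coeff a * (F ^ b).coeff b := by
  set q := Fintype.card K
  have hq : 0 < q := Fintype.card_pos
  have hsplit : F ^ (a * q + b) = expand K q (F ^ a) * F ^ b := by
    rw [pow_add, pow_mul, FiniteField.expand_card]
  rw [hsplit, coeff_mul, Finset.sum_eq_single (a * q, b)]
  · rw [coeff_expand hq, if_pos (dvd_mul_left q a), Nat.mul_div_cancel _ hq]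
  · rintro ⟨x, y⟩ hxy hne
    rw [mem_antidiagonal] at hxy
    rw [coeff_expand hq]
    split_ifs with hdvd
    · obtain ⟨j, rfl⟩ := hdvd
      have hj : j < a := by
        rcases lt_trichotomy j a with h | rfl | h
        · exact h
        · exact absurd (by simp only [Prod.mk.injEq]; constructor <;> lia) hne
        · nlinarith
      -- `y ≥ q + b > 2 b ≥ deg (F ^ b)`
      have hy : (F ^ b).natDegree < y := by
        have : q * (j + 1) ≤ q * a := Nat.mul_le_mul_left q hj
        calc (F ^ b).natDegree ≤ b * 2 := natDegree_pow_le_of_le b hF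
          _ < y := by nlinarith
      rw [coeff_eq_zero_of_natDegree_lt hy, mul_zero]
    · rw [zero_mul]
  · exact fun h => (h (mem_antidiagonal.2 rfl)).elim

theorem isDigitMultiplicative_trinomial (p : ℕ) [Fact p.Prime] :
    IsDigitMultiplicative p (fun n => (trinomial n : ZMod p)) where
  apply_zero := by simp [trinomial]
  apply_mul_add a b hb := by
    have hdeg : (1 + X + X ^ 2 : (ZMod p)[X]).natDegree ≤ 2 := by compute_degree
    simpa only [trinomial_cast_eq_coeff, ZMod.card] using
      coeff_pow_mul_card_add hdeg a (b := b) (by rwa [ZMod.card])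

theorem trinomial_mod_p_uniformly_recurrent_general (p : ℕ) (hp : p.Prime)
    (h0 : ∀ i < p, ¬ p ∣ trinomial i)
    (hroot : ∃ i < p, orderOf ((trinomial i : ZMod p)) = p - 1) :
    ∀ i₀ m : ℕ, ∃ C : ℕ, ∀ i : ℕ, ∃ j : ℕ, i ≤ j ∧ j + m ≤ i + C ∧
      ∀ t < m, trinomial (j + t) % p = trinomial (i₀ + t) % p := by
  have := Fact.mk hp
  have hT : IsUniformlyRecurrent (fun n => (trinomial n : ZMod p)) :=
    (isDigitMultiplicative_trinomial p).isUniformlyRecurrent_of_orderOf hp.one_lt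
      (fun i hi => by rw [Ne, ZMod.natCast_eq_zero_iff]; exact h0 i hi)
      (by simpa only [ZMod.card] using hroot)
  simpa only [IsUniformlyRecurrent, Function.comp_def, ZMod.val_natCast] using hT.comp ZMod.val

theorem trinomial_mod_p_uniformly_recurrent (p : ℕ) (hp : p.Prime) (hodd : Odd p)
    (h0 : ∀ i < p, ¬ p ∣ trinomial i)
    (hroot : ∃ i < p, orderOf ((trinomial i : ZMod p)) = p - 1) :
    ∀ i₀ m : ℕ, ∃ C : ℕ, ∀ i : ℕ, ∃ j : ℕ, i ≤ j ∧ j + m ≤ i + C ∧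
      ∀ t < m, trinomial (j + t) % p = trinomial (i₀ + t) % p :=
  trinomial_mod_p_uniformly_recurrent_general p hp h0 hroot
end
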